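/- Suppose p_i = 0 almost surely for all i in I_1. For the step-down test with critical values beta_i = i*alpha/(n+1-i*(1-alpha)), the expected number of false rejections satisfies E[V(tau_SD)] <= (alpha/(1-alpha))*(n_1+1) if and only if E[M_{I_0}(sigma)] <= alpha*(n+1)*P(R(tau_SD) = n), where sigma = min{beta_i : p_{i:n} > beta_i} ∧ beta_n. -/

import Mathlib

open MeasureTheory Finset
open scoped Classical

noncomputable section

variable {Ω : Type*}

/-- Number of p-values with index in `I` that are `≤ t` (e.g. false rejections `V`). -/
def Vc {n : ℕ} (p : Fin n → Ω → ℝ) (I : Finset (Fin n)) (t : ℝ) (ω : Ω) : ℕ :=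
  (I.filter fun i => p i ω ≤ t).card

/-- Total number of rejections `R(t)`. -/
def Rc {n : ℕ} (p : Fin n → Ω → ℝ) (t : ℝ) (ω : Ω) : ℕ :=
  (Finset.univ.filter fun i => p i ω ≤ t).card

/-- Critical values `β_i = iα/(n+1-i(1-α))` (note `β_0 = 0`). -/
def beta (n : ℕ) (α : ℝ) (i : ℕ) : ℝ := i * α / (n + 1 - i * (1 - α))

/-- Step-down boundary: `max {crit i : p_{j:n} ≤ crit j for all j ≤ i}`, max ∅ := 0.
(`p_{j:n} ≤ c ↔ R(c) ≥ j`.) -/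
def tauSD {n : ℕ} (p : Fin n → Ω → ℝ) (crit : ℕ → ℝ) (ω : Ω) : ℝ :=
  if h : ((Finset.Icc 1 n).filter fun i =>
      ∀ j ∈ Finset.Icc 1 i, j ≤ Rc p (crit j) ω).Nonempty then
    (((Finset.Icc 1 n).filter fun i =>
      ∀ j ∈ Finset.Icc 1 i, j ≤ Rc p (crit j) ω)).sup' h crit
  else 0

/-- Step-up boundary: `max {crit i : p_{i:n} ≤ crit i}`, max ∅ := 0. -/
def tauSU {n : ℕ} (p : Fin n → Ω → ℝ) (crit : ℕ → ℝ) (ω : Ω) : ℝ :=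
  if h : ((Finset.Icc 1 n).filter fun i => i ≤ Rc p (crit i) ω).Nonempty then
    ((Finset.Icc 1 n).filter fun i => i ≤ Rc p (crit i) ω).sup' h crit
  else 0

/-- FDR estimator `\hat α_n(t)`. -/
def alphaHat {n : ℕ} (p : Fin n → Ω → ℝ) (t : ℝ) (ω : Ω) : ℝ :=
  (t / (1 - t)) * ((1 - (Rc p t ω : ℝ) / n) / ((Rc p t ω : ℝ) / n + 1 / n))

/-- `σ = min {crit i : p_{i:n} > crit i} ∧ crit n` (min ∅ := crit n). -/
def sigmaB {n : ℕ} (p : Fin n → Ω → ℝ) (crit : ℕ → ℝ) (ω : Ω) : ℝ :=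
  min (if h : ((Finset.Icc 1 n).filter fun i => Rc p (crit i) ω < i).Nonempty then
        ((Finset.Icc 1 n).filter fun i => Rc p (crit i) ω < i).inf' h crit
      else crit n) (crit n)

/-- The filtration `F_t^T`, `T = {0, β_1, ..., β_n}` indexed by `k ∈ {0,...,n}`. -/
def Ffilt {n : ℕ} (p : Fin n → Ω → ℝ) (B : ℕ → ℝ) (k : ℕ) : MeasurableSpace Ω :=
  MeasurableSpace.generateFrom {A | ∃ i : Fin n, ∃ j ≤ k, A = {ω | p i ω ≤ B j}}

/-- The martingale-type process `M_J(t) = ∑_{i∈J} (1(p_i ≤ t) - t)/(1-t)` at `t`. -/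
def Mval {n : ℕ} (p : Fin n → Ω → ℝ) (J : Finset (Fin n)) (t : ℝ) (ω : Ω) : ℝ :=
  ∑ i ∈ J, ((if p i ω ≤ t then (1 : ℝ) else 0) - t) / (1 - t)

/-!
Under the Dirac configuration every false null is rejected at any nonnegative threshold, so
`R(t) = V(t) + n₁`. Let `k` be the number of steps passed by the step-down test. Then
`τ_SD = β_k`, `σ = β_{min(k+1, n)}` and `R(τ_SD) = R(σ) = k`, hence `V(τ_SD) = V(σ) = k - n₁`.
The critical values are exactly those for which `M_{I₀}(β_{k+1}) = (1-α)(k-n₁) - α(n₁+1)`,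
while on `{k = n}` one has `M_{I₀}(β_n) = n₀`. Together this gives the pointwise identity
`M_{I₀}(σ) = (1-α) V(τ_SD) - α(n₁+1) + α(n+1) 1{R(τ_SD) = n}`, and taking expectations turns
one inequality into the other.
-/

lemma le_card_filter_Icc_iff_of_antitone {P : ℕ → Prop} (hP : Antitone P)
    {n i : ℕ} (hi : i ∈ Icc 1 n) : P i ↔ i ≤ #{j ∈ Icc 1 n | P j} := by
  rw [mem_Icc] at hi
  constructor
  · intro h
    calc i = #(Icc 1 i) := by simp
      _ ≤ _ := card_le_card fun j hj => by
        rw [mem_Icc] at hj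
        exact mem_filter.2 ⟨mem_Icc.2 ⟨hj.1, hj.2.trans hi.2⟩, hP hj.2 h⟩
  · intro h
    by_contra hne
    have hsub : {j ∈ Icc 1 n | P j} ⊆ Icc 1 (i - 1) := fun j hj => by
      rw [mem_filter, mem_Icc] at hj
      exact mem_Icc.2 ⟨hj.1.1, by by_contra hc; exact hne (hP (by omega) hj.2)⟩
    have := card_le_card hsub
    simp only [Nat.card_Icc] at this
    omega

lemma measurable_card_filter {ι : Type*} [MeasurableSpace Ω] (s : Finset ι) (P : ι → Ω → Prop)
    (hP : ∀ i ∈ s, MeasurableSet {ω | P i ω}) :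
    Measurable fun ω => #{i ∈ s | P i ω} := by
  simp_rw [card_filter]
  exact Finset.measurable_sum _ fun i hi =>
    Measurable.ite (hP i hi) measurable_const measurable_const

section Counts

variable {n : ℕ} {p : Fin n → Ω → ℝ}

lemma Rc_le (p : Fin n → Ω → ℝ) (t : ℝ) (ω : Ω) : Rc p t ω ≤ n := by
  simpa [Rc] using card_filter_le univ fun i => p i ω ≤ t

lemma Rc_mono (p : Fin n → Ω → ℝ) (ω : Ω) {t t' : ℝ} (h : t ≤ t') : Rc p t ω ≤ Rc p t' ω :=
  card_le_card fun i hi => by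
    simp only [mem_filter, mem_univ, true_and] at hi ⊢
    exact hi.trans h

lemma Rc_eq_Vc_add {I : Finset (Fin n)} {ω : Ω} (hω : ∀ i ∈ Iᶜ, p i ω = 0) {t : ℝ}
    (ht : 0 ≤ t) : Rc p t ω = Vc p I t ω + (n - #I) := by
  have hcompl : {i ∈ Iᶜ | p i ω ≤ t} = Iᶜ := filter_true_of_mem fun i hi => (hω i hi).symm ▸ ht
  rw [Rc, Vc, ← union_compl I, filter_union, card_union_of_disjoint
    (disjoint_compl_right.mono (filter_subset _ _) (filter_subset _ _)), hcompl, card_compl,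
    Fintype.card_fin]

lemma Mval_eq_div (p : Fin n → Ω → ℝ) (J : Finset (Fin n)) (t : ℝ) (ω : Ω) :
    Mval p J t ω = ((Vc p J t ω : ℝ) - #J * t) / (1 - t) := by
  rw [Mval, ← sum_div, sum_sub_distrib, sum_const, nsmul_eq_mul, sum_boole, Vc]

lemma measurable_Vc [MeasurableSpace Ω] (hp : ∀ i, Measurable (p i)) (I : Finset (Fin n))
    {τ : Ω → ℝ} (hτ : Measurable τ) : Measurable fun ω => Vc p I (τ ω) ω :=
  measurable_card_filter I _ fun i _ => measurableSet_le (hp i) hτ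

lemma measurable_Rc [MeasurableSpace Ω] (hp : ∀ i, Measurable (p i)) {τ : Ω → ℝ}
    (hτ : Measurable τ) : Measurable fun ω => Rc p (τ ω) ω :=
  measurable_Vc hp univ hτ

lemma integrable_Vc [MeasurableSpace Ω] {μ : Measure Ω} [IsFiniteMeasure μ]
    (hp : ∀ i, Measurable (p i)) (I : Finset (Fin n)) {τ : Ω → ℝ} (hτ : Measurable τ) :
    Integrable (fun ω => (Vc p I (τ ω) ω : ℝ)) μ := by
  refine .of_bound (measurable_from_nat.comp (measurable_Vc hp I hτ)).aestronglyMeasurable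
    (#I) (ae_of_all _ fun ω => ?_)
  rw [Real.norm_natCast]
  exact_mod_cast card_filter_le _ _

end Counts

section StepDown

variable {n : ℕ} (p : Fin n → Ω → ℝ) (crit : ℕ → ℝ)

/-- The number of rejections of the step-down test: `τ_SD = crit (stepDownCount p crit ω)`. -/
def stepDownCount (ω : Ω) : ℕ :=
  ((Finset.Icc 1 n).filter fun i => ∀ j ∈ Finset.Icc 1 i, j ≤ Rc p (crit j) ω).card

variable {p crit} {ω : Ω}

lemma le_stepDownCount_iff {i : ℕ} (hi : i ∈ Icc 1 n) :
    (∀ j ∈ Icc 1 i, j ≤ Rc p (crit j) ω) ↔ i ≤ stepDownCount p crit ω :=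
  le_card_filter_Icc_iff_of_antitone
    (P := fun i => ∀ j ∈ Icc 1 i, j ≤ Rc p (crit j) ω)
    (fun _ _ hab h j hj => h j (Icc_subset_Icc_right hab hj)) hi

-- The filters in `tauSD` and `stepDownCount` carry the classical decidability instance, which
-- instance search does not find here, so it is supplied by hand.
lemma stepDownCount_le : stepDownCount p crit ω ≤ n :=
  (@card_filter_le _ _ _ fun _ => Classical.propDecidable _).trans_eq (by simp)

lemma le_Rc_of_le_stepDownCount {j : ℕ} (hj : j ≤ stepDownCount p crit ω) :
    j ≤ Rc p (crit j) ω := by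
  rcases Nat.eq_zero_or_pos j with rfl | hj0
  · exact Nat.zero_le _
  · exact (le_stepDownCount_iff (mem_Icc.2 ⟨hj0, hj.trans stepDownCount_le⟩)).2 hj j
      (mem_Icc.2 ⟨hj0, le_rfl⟩)

lemma Rc_lt_of_stepDownCount_lt (h : stepDownCount p crit ω < n) :
    Rc p (crit (stepDownCount p crit ω + 1)) ω < stepDownCount p crit ω + 1 := by
  set K := stepDownCount p crit ω
  by_contra! hc
  have hpass : ∀ j ∈ Icc 1 (K + 1), j ≤ Rc p (crit j) ω := fun j hj => by
    rcases (mem_Icc.1 hj).2.lt_or_eq with hlt | rfl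
    · exact le_Rc_of_le_stepDownCount (Nat.lt_succ_iff.1 hlt)
    · exact hc
  have := (le_stepDownCount_iff (mem_Icc.2 ⟨K.succ_pos, h⟩)).1 hpass
  omega

lemma Rc_crit_succ_stepDownCount (hcrit : MonotoneOn crit (Set.Iic n))
    (h : stepDownCount p crit ω < n) :
    Rc p (crit (stepDownCount p crit ω + 1)) ω = stepDownCount p crit ω := by
  have hmono : crit (stepDownCount p crit ω) ≤ crit (stepDownCount p crit ω + 1) :=
    hcrit (Set.mem_Iic.2 h.le) (Set.mem_Iic.2 h) (Nat.le_add_right _ 1)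
  exact le_antisymm (Nat.lt_succ_iff.1 (Rc_lt_of_stepDownCount_lt h))
    ((le_Rc_of_le_stepDownCount le_rfl).trans (Rc_mono p ω hmono))

lemma Rc_crit_stepDownCount (hcrit : MonotoneOn crit (Set.Iic n)) :
    Rc p (crit (stepDownCount p crit ω)) ω = stepDownCount p crit ω := by
  refine le_antisymm ?_ (le_Rc_of_le_stepDownCount le_rfl)
  rcases stepDownCount_le.lt_or_eq with hK | hK
  · exact (Rc_mono p ω (hcrit (Set.mem_Iic.2 hK.le) (Set.mem_Iic.2 hK)
      (Nat.le_add_right _ 1))).trans_eq (Rc_crit_succ_stepDownCount hcrit hK)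
  · exact (Rc_le p _ ω).trans hK.ge

lemma tauSD_eq (hcrit : MonotoneOn crit (Set.Iic n)) (hcrit0 : crit 0 = 0) :
    tauSD p crit ω = crit (stepDownCount p crit ω) := by
  have hK : stepDownCount p crit ω ≤ n := stepDownCount_le
  unfold tauSD
  split_ifs with h
  · refine le_antisymm (sup'_le _ _ fun i hi => ?_) (le_sup' _ ?_)
    · simp only [mem_filter] at hi
      exact hcrit (Set.mem_Iic.2 (mem_Icc.1 hi.1).2) (Set.mem_Iic.2 hK)
        ((le_stepDownCount_iff hi.1).1 hi.2)
    · have hK1 : 1 ≤ stepDownCount p crit ω := card_pos.2 h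
      simp only [mem_filter]
      exact ⟨mem_Icc.2 ⟨hK1, hK⟩, (le_stepDownCount_iff (mem_Icc.2 ⟨hK1, hK⟩)).2 le_rfl⟩
  · rw [stepDownCount, not_nonempty_iff_eq_empty.1 h, card_empty, hcrit0]

lemma sigmaB_eq (hcrit : MonotoneOn crit (Set.Iic n)) :
    sigmaB p crit ω = crit (min (stepDownCount p crit ω + 1) n) := by
  set K := stepDownCount p crit ω
  have hK : K ≤ n := stepDownCount_le
  have hfail_gt : ∀ i, Rc p (crit i) ω < i → K < i := fun i hi => by
    by_contra! hiK
    exact (le_Rc_of_le_stepDownCount hiK).not_gt hi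
  unfold sigmaB
  split_ifs with hne
  · obtain ⟨i, hi⟩ := hne
    have hKn : K < n :=
      (hfail_gt i (mem_filter.1 hi).2).trans_le (mem_Icc.1 (mem_filter.1 hi).1).2
    have hmem : K + 1 ∈ (Icc 1 n).filter fun i => Rc p (crit i) ω < i :=
      mem_filter.2 ⟨mem_Icc.2 ⟨K.succ_pos, hKn⟩, Rc_lt_of_stepDownCount_lt hKn⟩
    have hinf : ((Icc 1 n).filter fun i => Rc p (crit i) ω < i).inf' ⟨i, hi⟩ crit
        = crit (K + 1) := by
      refine le_antisymm (inf'_le _ hmem) (le_inf' _ _ fun j hj => ?_)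
      rw [mem_filter, mem_Icc] at hj
      exact hcrit (Set.mem_Iic.2 hKn) (Set.mem_Iic.2 hj.1.2) (hfail_gt j hj.2)
    rw [hinf, min_eq_left (hcrit (Set.mem_Iic.2 hKn) (Set.mem_Iic.2 le_rfl) hKn),
      min_eq_left (Nat.succ_le_of_lt hKn)]
  · have hKn : K = n := by
      by_contra hKn
      have hKn : K < n := lt_of_le_of_ne hK hKn
      exact hne ⟨K + 1, mem_filter.2 ⟨mem_Icc.2 ⟨K.succ_pos, hKn⟩,
        Rc_lt_of_stepDownCount_lt hKn⟩⟩
    rw [min_self, hKn, min_eq_right n.le_succ]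

lemma Rc_tauSD (hcrit : MonotoneOn crit (Set.Iic n)) (hcrit0 : crit 0 = 0) :
    Rc p (tauSD p crit ω) ω = stepDownCount p crit ω := by
  rw [tauSD_eq hcrit hcrit0, Rc_crit_stepDownCount hcrit]

lemma Rc_sigmaB (hcrit : MonotoneOn crit (Set.Iic n)) :
    Rc p (sigmaB p crit ω) ω = stepDownCount p crit ω := by
  rw [sigmaB_eq hcrit]
  rcases stepDownCount_le.lt_or_eq with hK | hK
  · rw [min_eq_left (Nat.succ_le_of_lt hK), Rc_crit_succ_stepDownCount hcrit hK]
  · rw [show min (stepDownCount p crit ω + 1) n = stepDownCount p crit ω by omega,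
      Rc_crit_stepDownCount hcrit]

lemma measurable_stepDownCount [MeasurableSpace Ω] (hp : ∀ i, Measurable (p i)) :
    Measurable (stepDownCount p crit) := by
  refine measurable_card_filter _ _ fun i _ => ?_
  simp only [Set.ofPred_forall]
  exact MeasurableSet.iInter fun j => MeasurableSet.iInter fun _ =>
    measurable_Rc hp measurable_const measurableSet_Ici

lemma measurable_tauSD [MeasurableSpace Ω] (hp : ∀ i, Measurable (p i))
    (hcrit : MonotoneOn crit (Set.Iic n)) (hcrit0 : crit 0 = 0) :
    Measurable (tauSD p crit) := by
  rw [show tauSD p crit = fun ω => crit (stepDownCount p crit ω) from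
    funext fun ω => tauSD_eq hcrit hcrit0]
  exact measurable_from_nat.comp (measurable_stepDownCount hp)

end StepDown

section Beta

variable {n : ℕ} {α : ℝ}

lemma beta_denom_pos (hα : α ∈ Set.Ioo (0 : ℝ) 1) {i : ℕ} (hi : i ≤ n) :
    0 < (n : ℝ) + 1 - i * (1 - α) := by
  have : (i : ℝ) * (1 - α) ≤ n * (1 - α) :=
    mul_le_mul_of_nonneg_right (by exact_mod_cast hi) (sub_nonneg.2 hα.2.le)
  nlinarith [hα.1, mul_nonneg (Nat.cast_nonneg n : (0 : ℝ) ≤ n) hα.1.le]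

lemma beta_zero : beta n α 0 = 0 := by simp [beta]

lemma beta_nonneg (hα : α ∈ Set.Ioo (0 : ℝ) 1) {i : ℕ} (hi : i ≤ n) : 0 ≤ beta n α i :=
  div_nonneg (mul_nonneg (Nat.cast_nonneg i) hα.1.le) (beta_denom_pos hα hi).le

lemma monotoneOn_beta (hα : α ∈ Set.Ioo (0 : ℝ) 1) : MonotoneOn (beta n α) (Set.Iic n) := by
  intro i hi j hj hij
  have hij' : (i : ℝ) ≤ j := by exact_mod_cast hij
  exact div_le_div₀ (mul_nonneg (Nat.cast_nonneg j) hα.1.le)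
    (mul_le_mul_of_nonneg_right hij' hα.1.le) (beta_denom_pos hα hj)
    (by nlinarith [hα.2])

lemma one_sub_beta_pos (hα : α ∈ Set.Ioo (0 : ℝ) 1) {i : ℕ} (hi : i ≤ n) :
    0 < 1 - beta n α i := by
  have hd := beta_denom_pos hα hi
  have hi' : (i : ℝ) ≤ n := by exact_mod_cast hi
  rw [beta, sub_pos, div_lt_one hd]
  linarith

/-- The critical values are designed so that `M_{I₀}(β_{k+1})` is affine in `V = k - n₁`
(here `m` plays the role of `n₁`). -/
lemma sub_sub_mul_beta_succ (hα : α ∈ Set.Ioo (0 : ℝ) 1) {k : ℕ} (hk : k < n) (m : ℝ) :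
    (k : ℝ) - m - (n - m) * beta n α (k + 1)
      = ((1 - α) * (k - m) - α * (m + 1)) * (1 - beta n α (k + 1)) := by
  have hd := beta_denom_pos hα (Nat.succ_le_of_lt hk)
  push_cast at hd ⊢
  rw [beta]
  push_cast
  field_simp
  ring

end Beta

lemma Mval_sigmaB_eq {n : ℕ} {p : Fin n → Ω → ℝ} {I0 : Finset (Fin n)} {α : ℝ}
    (hα : α ∈ Set.Ioo (0 : ℝ) 1) {ω : Ω} (hω : ∀ i ∈ I0ᶜ, p i ω = 0) :
    Mval p I0 (sigmaB p (beta n α) ω) ω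
      = (1 - α) * Vc p I0 (tauSD p (beta n α) ω) ω - α * (((n - #I0 : ℕ) : ℝ) + 1)
        + {ω | Rc p (tauSD p (beta n α) ω) ω = n}.indicator (fun _ => α * (n + 1)) ω := by
  have hmono := monotoneOn_beta (n := n) hα
  set K := stepDownCount p (beta n α) ω
  have hK : K ≤ n := stepDownCount_le
  have hVc : ∀ {t}, 0 ≤ t → Rc p t ω = K → (Vc p I0 t ω : ℝ) = K - ((n - #I0 : ℕ) : ℝ) := by
    intro t ht hRt
    have := Rc_eq_Vc_add hω ht
    rw [eq_sub_iff_add_eq]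
    exact_mod_cast (this.symm.trans hRt)
  have hσ := sigmaB_eq (p := p) (ω := ω) hmono
  have hσ0 : 0 ≤ sigmaB p (beta n α) ω := hσ ▸ beta_nonneg hα (min_le_right _ _)
  have hσ1 : 0 < 1 - sigmaB p (beta n α) ω := hσ ▸ one_sub_beta_pos hα (min_le_right _ _)
  have hτ0 : 0 ≤ tauSD p (beta n α) ω := tauSD_eq hmono beta_zero ▸ beta_nonneg hα hK
  have hRτ : Rc p (tauSD p (beta n α) ω) ω = K := Rc_tauSD hmono beta_zero
  have hI0 : ((#I0 : ℕ) : ℝ) = n - ((n - #I0 : ℕ) : ℝ) := by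
    rw [Nat.cast_sub (card_le_univ I0 |>.trans_eq (Fintype.card_fin n))]
    ring
  rw [Mval_eq_div, hVc hσ0 (Rc_sigmaB hmono), hVc hτ0 hRτ, div_eq_iff hσ1.ne', hI0]
  rcases hK.lt_or_eq with hKn | hKn
  · rw [Set.indicator_of_notMem (by simpa [hRτ] using hKn.ne), hσ, min_eq_left hKn,
      sub_sub_mul_beta_succ hα hKn]
    ring
  · rw [Set.indicator_of_mem (by simpa [hRτ] using hKn), hKn]
    ring

lemma integral_Mval_sigmaB {n : ℕ} [MeasurableSpace Ω] {μ : Measure Ω} [IsProbabilityMeasure μ]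
    {p : Fin n → Ω → ℝ} {I0 : Finset (Fin n)} {α : ℝ} (hα : α ∈ Set.Ioo (0 : ℝ) 1)
    (hp : ∀ i, Measurable (p i)) (hdirac : ∀ᵐ ω ∂μ, ∀ i ∈ I0ᶜ, p i ω = 0) :
    ∫ ω, Mval p I0 (sigmaB p (beta n α) ω) ω ∂μ
      = (1 - α) * ∫ ω, (Vc p I0 (tauSD p (beta n α) ω) ω : ℝ) ∂μ
        - α * (((n - #I0 : ℕ) : ℝ) + 1)
        + α * (n + 1) * μ.real {ω | Rc p (tauSD p (beta n α) ω) ω = n} := by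
  have hτ := measurable_tauSD hp (monotoneOn_beta hα) beta_zero
  have hA : MeasurableSet {ω | Rc p (tauSD p (beta n α) ω) ω = n} :=
    measurable_Rc hp hτ (measurableSet_singleton n)
  have hV := integrable_Vc (μ := μ) hp I0 hτ
  have haffine : Integrable (fun ω => (1 - α) * (Vc p I0 (tauSD p (beta n α) ω) ω : ℝ)
      - α * (((n - #I0 : ℕ) : ℝ) + 1)) μ :=
    (hV.const_mul _).sub (integrable_const _)
  rw [integral_congr_ae (hdirac.mono fun ω hω => Mval_sigmaB_eq hα hω),
    integral_add haffine ((integrable_const _).indicator hA),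
    integral_sub (hV.const_mul _) (integrable_const _), integral_const_mul,
    integral_indicator_const _ hA]
  simp [mul_comm]

theorem enfr_iff_martingale_bound_general {n : ℕ} [MeasurableSpace Ω] (μ : Measure Ω)
    [IsProbabilityMeasure μ] (p : Fin n → Ω → ℝ) (I0 : Finset (Fin n)) (α : ℝ)
    (hα : α ∈ Set.Ioo (0 : ℝ) 1)
    (hpm : ∀ i, Measurable (p i))
    (hdirac : ∀ᵐ ω ∂μ, ∀ i ∈ I0ᶜ, p i ω = 0) :
    (∫ ω, (Vc p I0 (tauSD p (beta n α) ω) ω : ℝ) ∂μ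
        ≤ α / (1 - α) * (((n - I0.card : ℕ) : ℝ) + 1))
    ↔ (∫ ω, Mval p I0 (sigmaB p (beta n α) ω) ω ∂μ
        ≤ α * (n + 1) * (μ {ω | Rc p (tauSD p (beta n α) ω) ω = n}).toReal) := by
  rw [integral_Mval_sigmaB hα hpm hdirac, ← measureReal_def, div_mul_eq_mul_div,
    le_div_iff₀ (sub_pos.2 hα.2)]
  constructor <;> intro h <;> linarith

/-- under Dirac configuration on `I_1`, the ENFR bound
`E[V(τ_SD)] ≤ (α/(1-α))(n_1+1)` holds iff `E[M_{I_0}(σ)] ≤ α(n+1)P(R(τ_SD)=n)`. -/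
theorem enfr_iff_martingale_bound {n : ℕ} [MeasurableSpace Ω] (μ : Measure Ω)
    [IsProbabilityMeasure μ] (p : Fin n → Ω → ℝ) (I0 : Finset (Fin n)) (α : ℝ)
    (hn : 1 ≤ n) (hα : α ∈ Set.Ioo (0 : ℝ) 1) (hI0 : I0.Nonempty)
    (hp01 : ∀ i ω, p i ω ∈ Set.Icc (0 : ℝ) 1) (hpm : ∀ i, Measurable (p i))
    (hdirac : ∀ᵐ ω ∂μ, ∀ i ∈ I0ᶜ, p i ω = 0) :
    (∫ ω, (Vc p I0 (tauSD p (beta n α) ω) ω : ℝ) ∂μ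
        ≤ α / (1 - α) * (((n - I0.card : ℕ) : ℝ) + 1))
    ↔ (∫ ω, Mval p I0 (sigmaB p (beta n α) ω) ω ∂μ
        ≤ α * (n + 1) * (μ {ω | Rc p (tauSD p (beta n α) ω) ω = n}).toReal) :=
  enfr_iff_martingale_bound_general μ p I0 α hα hpm hdirac

end
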